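/- Let $d \geq 2$, $i \in \mathbb{Z}_{\geq 0}$, and let $h(a) = \theta_{d-1}\int_0^a (1-y^2)^{(d-1)/2}\,dy$ for $a \in [0,1]$. Fix $\varepsilon \in (0,1)$ and set $\delta = \varepsilon/(4+i)$. Then as $s \to \infty$, $$\theta_{d-1}\int_0^{s^{\delta-1}} e^{-s h(a)} h(a)^{i}\, da = i!\, s^{-i-1} + O(s^{\varepsilon - i - 3}).$$ -/

import Mathlib

/-!
Substituting `w = s h(a)` turns `∫₀^A h'(a) e^{-s h(a)} h(a)^i da` into
`s^{-i-1} ∫₀^{s h(A)} e^{-w} w^i dw`, which falls short of `i! s^{-i-1}` only by the Gamma tail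
beyond `s h(A) ≳ s^δ`, an exponentially small amount. On `[0, A]` with `A = s^{δ-1}` the
derivative `h'(a) = θ_{d-1} (1 - a²)^{(d-1)/2}` is within a factor `1 - O(A²)` of `θ_{d-1}`,
so replacing `h'` by `θ_{d-1}` costs a relative error `O(A²) = O(s^{2δ-2})`.
-/

open MeasureTheory Metric Set Real

/-- θ_n, the Lebesgue volume of the unit Euclidean ball in ℝ^n. -/
noncomputable def ubv (n : ℕ) : ℝ :=
  (volume (Metric.ball (0 : EuclideanSpace ℝ (Fin n)) 1)).toReal

/-- The slab-volume function `h(a) = θ_{d-1} ∫_0^a (1-y²)^{(d-1)/2} dy`. -/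
noncomputable def hSlab (d : ℕ) (a : ℝ) : ℝ :=
  ubv (d-1) * ∫ y in (0:ℝ)..a, (1 - y^2) ^ (((d:ℝ) - 1)/2)

open Filter
open scoped Nat

lemma integrableOn_exp_neg_mul_pow_Ioi (i : ℕ) :
    IntegrableOn (fun w : ℝ => exp (-w) * w ^ i) (Ioi 0) := by
  refine (GammaIntegral_convergent (s := (i : ℝ) + 1) (by positivity)).congr_fun
    (fun w _ => ?_) measurableSet_Ioi
  simp [rpow_natCast]

lemma integral_exp_neg_mul_pow_Ioi (i : ℕ) :
    ∫ w in Ioi (0 : ℝ), exp (-w) * w ^ i = i ! := by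
  rw [← Gamma_nat_eq_factorial, Gamma_eq_integral (by positivity)]
  refine setIntegral_congr_fun measurableSet_Ioi fun w _ => ?_
  simp [rpow_natCast]

lemma exp_neg_mul_pow_le (i : ℕ) {w : ℝ} (hw : 0 ≤ w) :
    exp (-w) * w ^ i ≤ 2 ^ i * i ! * exp (-(1 / 2) * w) := by
  calc exp (-w) * w ^ i = 2 ^ i * i ! * ((w / 2) ^ i / i !) * exp (-w) := by
        rw [div_pow]
        field_simp
    _ ≤ 2 ^ i * i ! * exp (w / 2) * exp (-w) := by
        gcongr
        exact pow_div_factorial_le_exp _ (by positivity) i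
    _ = 2 ^ i * i ! * exp (-(1 / 2) * w) := by
        rw [mul_assoc, ← exp_add]
        ring_nf

lemma integral_exp_neg_mul_pow_Ioi_le (i : ℕ) {T : ℝ} (hT : 0 ≤ T) :
    ∫ w in Ioi T, exp (-w) * w ^ i ≤ 2 ^ (i + 1) * i ! * exp (-(1 / 2) * T) := by
  have hdom : IntegrableOn (fun w => 2 ^ i * i ! * exp (-(1 / 2) * w)) (Ioi T) :=
    (exp_neg_integrableOn_Ioi T (by norm_num : (0 : ℝ) < 1 / 2)).const_mul _
  calc ∫ w in Ioi T, exp (-w) * w ^ i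
      ≤ ∫ w in Ioi T, 2 ^ i * i ! * exp (-(1 / 2) * w) :=
        setIntegral_mono_on ((integrableOn_exp_neg_mul_pow_Ioi i).mono_set (Ioi_subset_Ioi hT))
          hdom measurableSet_Ioi fun w hw => exp_neg_mul_pow_le i (hT.trans hw.le)
    _ = 2 ^ (i + 1) * i ! * exp (-(1 / 2) * T) := by
        rw [integral_const_mul, integral_exp_mul_Ioi (by norm_num)]
        ring

lemma integral_exp_neg_mul_pow_mem_Icc (i : ℕ) {T : ℝ} (hT : 0 ≤ T) :
    ∫ w in (0 : ℝ)..T, exp (-w) * w ^ i ∈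
      Icc ((i ! : ℝ) - 2 ^ (i + 1) * i ! * exp (-(1 / 2) * T)) (i ! : ℝ) := by
  have hsplit : (∫ w in (0 : ℝ)..T, exp (-w) * w ^ i) + ∫ w in Ioi T, exp (-w) * w ^ i = i ! := by
    rw [intervalIntegral.integral_of_le hT, ← integral_exp_neg_mul_pow_Ioi i,
      ← setIntegral_union (Ioc_disjoint_Ioi le_rfl) measurableSet_Ioi
        ((integrableOn_exp_neg_mul_pow_Ioi i).mono_set Ioc_subset_Ioi_self)
        ((integrableOn_exp_neg_mul_pow_Ioi i).mono_set (Ioi_subset_Ioi hT)),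
      Ioc_union_Ioi_eq_Ioi hT]
  have htail : 0 ≤ ∫ w in Ioi T, exp (-w) * w ^ i :=
    setIntegral_nonneg measurableSet_Ioi fun w hw => by
      have := hT.trans hw.le
      positivity
  constructor <;> linarith [integral_exp_neg_mul_pow_Ioi_le i hT]

lemma integral_deriv_mul_exp_neg_mul_pow {f f' : ℝ → ℝ} {A s : ℝ} (i : ℕ) (hs : s ≠ 0)
    (hf0 : f 0 = 0) (hf : ∀ x ∈ uIcc 0 A, HasDerivAt f (f' x) x)
    (hf' : ContinuousOn f' (uIcc 0 A)) :
    ∫ a in (0 : ℝ)..A, f' a * (exp (-(s * f a)) * f a ^ i) =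
      (∫ w in (0 : ℝ)..s * f A, exp (-w) * w ^ i) / s ^ (i + 1) := by
  have hsubst := intervalIntegral.integral_comp_mul_deriv (f := fun a => s * f a)
    (f' := fun a => s * f' a) (g := fun w => exp (-w) * w ^ i)
    (fun x hx => (hf x hx).const_mul s) (continuousOn_const.mul hf') (by fun_prop)
  simp only [Function.comp_apply, hf0, mul_zero] at hsubst
  rw [← hsubst, eq_div_iff (pow_ne_zero _ hs), ← intervalIntegral.integral_mul_const]
  refine intervalIntegral.integral_congr fun a _ => ?_
  ring

lemma integral_mul_le_and_le_integral_mul {g u : ℝ → ℝ} {θ q A : ℝ} (hA : 0 ≤ A)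
    (hθ : 0 ≤ θ) (hq : 0 ≤ q) (hq' : q ≤ 1 / 2) (hu : ∀ x ∈ Icc 0 A, 0 ≤ u x)
    (hg_lo : ∀ x ∈ Icc 0 A, θ * (1 - q) ≤ g x) (hg_hi : ∀ x ∈ Icc 0 A, g x ≤ θ)
    (hui : IntervalIntegrable u volume 0 A)
    (hgui : IntervalIntegrable (fun x => g x * u x) volume 0 A) :
    ∫ x in (0 : ℝ)..A, g x * u x ≤ θ * ∫ x in (0 : ℝ)..A, u x ∧
      θ * ∫ x in (0 : ℝ)..A, u x ≤ (1 + 2 * q) * ∫ x in (0 : ℝ)..A, g x * u x := by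
  rw [← intervalIntegral.integral_const_mul]
  have hθu : 0 ≤ ∫ x in (0 : ℝ)..A, θ * u x :=
    intervalIntegral.integral_nonneg hA fun x hx => mul_nonneg hθ (hu x hx)
  have hlo : (1 - q) * ∫ x in (0 : ℝ)..A, θ * u x ≤ ∫ x in (0 : ℝ)..A, g x * u x := by
    rw [← intervalIntegral.integral_const_mul]
    refine intervalIntegral.integral_mono_on hA ((hui.const_mul θ).const_mul _) hgui
      fun x hx => ?_
    nlinarith [mul_le_mul_of_nonneg_right (hg_lo x hx) (hu x hx)]
  refine ⟨intervalIntegral.integral_mono_on hA hgui (hui.const_mul θ)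
    fun x hx => mul_le_mul_of_nonneg_right (hg_hi x hx) (hu x hx), ?_⟩
  -- `(1 - q) * (1 + 2 * q) ≥ 1` for `0 ≤ q ≤ 1 / 2`
  nlinarith [mul_nonneg (mul_nonneg hq (by linarith : (0 : ℝ) ≤ 1 - 2 * q)) hθu]

lemma mul_le_of_hasDerivAt_of_le {f f' : ℝ → ℝ} {m A a : ℝ} (hf0 : f 0 = 0)
    (hf : ∀ x ∈ Icc 0 A, HasDerivAt f (f' x) x) (hm : ∀ x ∈ Icc 0 A, m ≤ f' x)
    (ha : a ∈ Icc 0 A) : m * a ≤ f a := by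
  have hmvt := (convex_Icc 0 A).mul_sub_le_image_sub_of_le_deriv (f := f) (C := m)
    (fun x hx => (hf x hx).continuousAt.continuousWithinAt)
    (fun x hx => (hf x (interior_subset hx)).differentiableAt.differentiableWithinAt)
    (fun x hx => (hf x (interior_subset hx)).deriv ▸ hm x (interior_subset hx))
    0 (left_mem_Icc.2 (ha.1.trans ha.2)) a ha ha.1
  simpa [hf0] using hmvt

theorem abs_mul_integral_exp_neg_mul_pow_sub_le {f f' : ℝ → ℝ} {θ q A s : ℝ} (i : ℕ)
    (hA : 0 ≤ A) (hs : 0 < s) (hθ : 0 < θ) (hq : 0 ≤ q) (hq' : q ≤ 1 / 2) (hf0 : f 0 = 0)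
    (hf : ∀ x ∈ Icc 0 A, HasDerivAt f (f' x) x) (hf'c : ContinuousOn f' (Icc 0 A))
    (hf'_lo : ∀ x ∈ Icc 0 A, θ * (1 - q) ≤ f' x) (hf'_hi : ∀ x ∈ Icc 0 A, f' x ≤ θ) :
    |θ * (∫ a in (0 : ℝ)..A, exp (-(s * f a)) * f a ^ i) - i ! / s ^ (i + 1)| ≤
      (2 * q + 2 ^ (i + 1) * exp (-(θ / 4) * (s * A))) * (i ! / s ^ (i + 1)) := by
  have hIcc : uIcc 0 A = Icc 0 A := uIcc_of_le hA
  have hf_ge : ∀ a ∈ Icc 0 A, θ / 2 * a ≤ f a := fun a ha =>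
    mul_le_of_hasDerivAt_of_le hf0 hf (fun x hx => by nlinarith [hf'_lo x hx]) ha
  have hfc : ContinuousOn f (Icc 0 A) := fun x hx => (hf x hx).continuousAt.continuousWithinAt
  have hu : ContinuousOn (fun a => exp (-(s * f a)) * f a ^ i) (Icc 0 A) := by fun_prop
  obtain ⟨hJ_le, hI_le⟩ := integral_mul_le_and_le_integral_mul hA hθ.le hq hq'
    (fun a ha => by have := (mul_nonneg (by positivity) ha.1).trans (hf_ge a ha); positivity)
    hf'_lo hf'_hi (hu.intervalIntegrable_of_Icc hA) ((hf'c.mul hu).intervalIntegrable_of_Icc hA)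
  rw [integral_deriv_mul_exp_neg_mul_pow i hs.ne' hf0 (hIcc ▸ hf) (hIcc ▸ hf'c)] at hJ_le hI_le
  -- the Gamma tail beyond `T = s f(A)` is `O(e^{-T/2})`, and `f(A) ≥ θ A / 2`
  have hT : θ / 4 * (s * A) ≤ 1 / 2 * (s * f A) := by
    nlinarith [mul_le_mul_of_nonneg_left (hf_ge A (right_mem_Icc.2 hA)) hs.le]
  obtain ⟨hG_lo, hG_hi⟩ := integral_exp_neg_mul_pow_mem_Icc i
    (mul_nonneg hs.le ((mul_nonneg (by positivity) hA).trans (hf_ge A (right_mem_Icc.2 hA))))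
  set G := ∫ w in (0 : ℝ)..s * f A, exp (-w) * w ^ i
  set E := exp (-(θ / 4) * (s * A))
  have hexp : exp (-(1 / 2) * (s * f A)) ≤ E := exp_le_exp.2 (by linarith)
  have hG_le : G / s ^ (i + 1) ≤ i ! / s ^ (i + 1) := by gcongr
  have hG_ge : (1 - 2 ^ (i + 1) * E) * (i ! / s ^ (i + 1)) ≤ G / s ^ (i + 1) := by
    rw [← mul_div_assoc]
    gcongr
    nlinarith [mul_le_mul_of_nonneg_left hexp (by positivity : (0 : ℝ) ≤ 2 ^ (i + 1) * i !)]
  have hEv : 0 ≤ 2 ^ (i + 1) * E * (i ! / s ^ (i + 1)) := by positivity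
  rw [abs_le]
  constructor <;> nlinarith [mul_le_mul_of_nonneg_left hG_le (by linarith : (0 : ℝ) ≤ 1 + 2 * q)]

lemma ubv_pos (n : ℕ) : 0 < ubv n :=
  ENNReal.toReal_pos (measure_ball_pos volume 0 one_pos).ne' measure_ball_lt_top.ne

lemma continuous_one_sub_sq_rpow {p : ℝ} (hp : 0 ≤ p) :
    Continuous fun y : ℝ => (1 - y ^ 2) ^ p :=
  (by fun_prop : Continuous fun y : ℝ => 1 - y ^ 2).rpow_const fun _ => Or.inr hp

lemma hasDerivAt_hSlab {d : ℕ} (hd : 1 ≤ d) (a : ℝ) :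
    HasDerivAt (hSlab d) (ubv (d - 1) * (1 - a ^ 2) ^ (((d : ℝ) - 1) / 2)) a := by
  have hc := continuous_one_sub_sq_rpow (p := ((d : ℝ) - 1) / 2)
    (div_nonneg (sub_nonneg.2 (by exact_mod_cast hd)) zero_le_two)
  exact (intervalIntegral.integral_hasDerivAt_right (hc.intervalIntegrable _ _)
    (hc.stronglyMeasurableAtFilter _ _) hc.continuousAt).const_mul _

lemma one_sub_mul_le_rpow_one_sub {p x : ℝ} (hp : 0 ≤ p) (hx0 : 0 ≤ x) (hx1 : x ≤ 1) :
    1 - (p + 1) * x ≤ (1 - x) ^ p := by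
  rcases le_total p 1 with h | h
  · have := rpow_le_rpow_of_exponent_ge' (sub_nonneg.2 hx1) (by linarith) hp h
    rw [rpow_one] at this
    nlinarith
  · have := one_add_mul_self_le_rpow_one_add (by linarith : -1 ≤ -x) h
    rw [← sub_eq_add_neg] at this
    nlinarith

lemma rpow_one_sub_sq_mem_Icc {p A a : ℝ} (hp : 0 ≤ p) (hA : (p + 1) * A ^ 2 ≤ 1)
    (ha : a ∈ Icc 0 A) : (1 - a ^ 2) ^ p ∈ Icc (1 - (p + 1) * A ^ 2) 1 := by
  have ha2 : a ^ 2 ≤ A ^ 2 := pow_le_pow_left₀ ha.1 ha.2 2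
  have ha1 : a ^ 2 ≤ 1 := by nlinarith
  refine ⟨?_, rpow_le_one (by linarith) (by nlinarith) hp⟩
  nlinarith [one_sub_mul_le_rpow_one_sub hp (sq_nonneg a) ha1]

lemma eventually_mul_rpow_sq_lt (c : ℝ) {δ η : ℝ} (hδ : δ < 1) (hη : 0 < η) :
    ∀ᶠ s : ℝ in atTop, c * (s ^ (δ - 1)) ^ 2 < η := by
  have hlim := ((tendsto_rpow_neg_atTop (y := 1 - δ) (by linarith)).pow 2).const_mul c
  simp only [neg_sub, zero_pow two_ne_zero, mul_zero] at hlim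
  exact hlim.eventually_lt_const hη

lemma eventually_exp_neg_mul_rpow_le {c δ : ℝ} (hc : 0 < c) (hδ : 0 < δ) :
    ∀ᶠ s : ℝ in atTop, exp (-c * s ^ δ) ≤ s ^ (-2 : ℝ) := by
  have hlim := (tendsto_rpow_mul_exp_neg_mul_atTop_nhds_zero (2 / δ) c hc).comp
    (tendsto_rpow_atTop hδ)
  filter_upwards [hlim.eventually_lt_const one_pos, eventually_gt_atTop 0] with s hs hs0
  rw [Function.comp_apply, ← rpow_mul hs0.le, mul_div_cancel₀ _ hδ.ne'] at hs
  rw [rpow_neg hs0.le, ← one_div, le_div_iff₀ (by positivity)]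
  linarith

theorem abs_ubv_mul_integral_exp_neg_hSlab_sub_le {d : ℕ} (hd : 1 ≤ d) (i : ℕ) {A s : ℝ}
    (hA : 0 ≤ A) (hs : 0 < s) (hq : (((d : ℝ) - 1) / 2 + 1) * A ^ 2 ≤ 1 / 2) :
    |ubv (d - 1) * (∫ a in (0 : ℝ)..A, exp (-(s * hSlab d a)) * hSlab d a ^ i) -
        i ! / s ^ (i + 1)| ≤
      (2 * ((((d : ℝ) - 1) / 2 + 1) * A ^ 2) +
        2 ^ (i + 1) * exp (-(ubv (d - 1) / 4) * (s * A))) * (i ! / s ^ (i + 1)) := by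
  have hp : 0 ≤ ((d : ℝ) - 1) / 2 := div_nonneg (sub_nonneg.2 (by exact_mod_cast hd)) zero_le_two
  have hθ := ubv_pos (d - 1)
  have hslab := fun a (ha : a ∈ Icc 0 A) => rpow_one_sub_sq_mem_Icc hp (by linarith) ha
  exact abs_mul_integral_exp_neg_mul_pow_sub_le i hA hs hθ (by positivity) hq (by simp [hSlab])
    (fun x _ => hasDerivAt_hSlab hd x) ((continuous_one_sub_sq_rpow hp).const_mul _).continuousOn
    (fun x hx => mul_le_mul_of_nonneg_left (hslab x hx).1 hθ.le)
    (fun x hx => mul_le_of_le_one_right hθ.le (hslab x hx).2)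

/-- with `δ = ε/(4+i)`, as `s → ∞`,
`θ_{d-1} ∫_0^{s^{δ-1}} e^{-s h(a)} h(a)^i da = i! s^{-i-1} + O(s^{ε-i-3})`. -/
theorem integral_exp_slab_truncated (d : ℕ) (hd : 2 ≤ d) (i : ℕ)
    (ε : ℝ) (hε : ε ∈ Set.Ioo (0:ℝ) 1) (δ : ℝ) (hδ : δ = ε / (4 + (i:ℝ))) :
    ∃ C s₀ : ℝ, ∀ s ≥ s₀,
      |ubv (d-1) * (∫ a in (0:ℝ)..(s ^ (δ - 1)), Real.exp (-(s * hSlab d a)) * (hSlab d a)^i)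
        - (Nat.factorial i : ℝ) / s^(i+1)| ≤ C * s ^ (ε - (i:ℝ) - 3) := by
  obtain ⟨hε0, hε1⟩ := hε
  set p : ℝ := ((d : ℝ) - 1) / 2
  have hp : 0 ≤ p := div_nonneg (sub_nonneg.2 (by exact_mod_cast one_le_two.trans hd)) zero_le_two
  have hδ0 : 0 < δ := by rw [hδ]; positivity
  have h2δ : 2 * δ ≤ ε := by
    rw [hδ, mul_div_assoc', div_le_iff₀ (by positivity)]
    nlinarith [i.cast_nonneg (α := ℝ)]
  obtain ⟨s₀, hs₀⟩ := eventually_atTop.1 ((eventually_mul_rpow_sq_lt (p + 1)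
    (by linarith : δ < 1) (by norm_num : (0 : ℝ) < 1 / 2)).and ((eventually_exp_neg_mul_rpow_le
    (by positivity [ubv_pos (d - 1)] : 0 < ubv (d - 1) / 4) hδ0).and (eventually_ge_atTop 1)))
  refine ⟨(2 * (p + 1) + 2 ^ (i + 1)) * i !, s₀, fun s hs => ?_⟩
  obtain ⟨hq, hE, hs1⟩ := hs₀ s hs
  have hs0 : 0 < s := by linarith
  have hA2 : (s ^ (δ - 1)) ^ 2 ≤ s ^ (ε - 2) := by
    rw [← rpow_natCast, ← rpow_mul hs0.le]
    exact rpow_le_rpow_of_exponent_le hs1 (by push_cast; linarith)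
  have hE' : exp (-(ubv (d - 1) / 4) * (s * s ^ (δ - 1))) ≤ s ^ (ε - 2) := by
    rw [← rpow_one_add' hs0.le (by linarith), add_sub_cancel]
    exact hE.trans (rpow_le_rpow_of_exponent_le hs1 (by linarith))
  have hpow : s ^ (ε - i - 3) = s ^ (ε - 2) / s ^ (i + 1) := by
    rw [← rpow_natCast, ← rpow_sub hs0]
    push_cast
    ring_nf
  calc _ ≤ (2 * ((p + 1) * (s ^ (δ - 1)) ^ 2) +
          2 ^ (i + 1) * exp (-(ubv (d - 1) / 4) * (s * s ^ (δ - 1)))) * (i ! / s ^ (i + 1)) :=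
        abs_ubv_mul_integral_exp_neg_hSlab_sub_le (one_le_two.trans hd) i
          (by positivity) hs0 hq.le
    _ ≤ (2 * (p + 1) + 2 ^ (i + 1)) * s ^ (ε - 2) * (i ! / s ^ (i + 1)) := by
        gcongr
        linarith [mul_le_mul_of_nonneg_left hA2 (by positivity : (0 : ℝ) ≤ 2 * (p + 1)),
          mul_le_mul_of_nonneg_left hE' (by positivity : (0 : ℝ) ≤ 2 ^ (i + 1))]
    _ = (2 * (p + 1) + 2 ^ (i + 1)) * i ! * s ^ (ε - i - 3) := by
        rw [hpow]
        ring
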